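/- The set Γ = {U ∈ ℂ²ˣ² : Uᵀ = U, U*U = I} of symmetric unitary 2×2 matrices coincides with the image of the map (X, z) ↦ zX from {X ∈ ℍ : Xᵀ = X, N(X) = 1} × {z ∈ ℂ : |z| = 1}, and this map is 2-to-1 onto Γ, with (X, z) and (-X, -z) having the same image. -/

import Mathlib

open Complex in
/-- `X` is a symmetric real quaternion, realized as the `2×2` complex matrix
`x⁰e₀ + x¹e₁ + x³e₃ = ((x⁰ - ix³, -ix¹), (-ix¹, x⁰ + ix³))` with `x⁰, x¹, x³ ∈ ℝ`. -/
def IsSymRealQuat (X : Matrix (Fin 2) (Fin 2) ℂ) : Prop :=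
  ∃ x0 x1 x3 : ℝ,
    X = !![(x0 : ℂ) - I * x3, -(I * x1); -(I * x1), (x0 : ℂ) + I * x3]

/-!
A `2×2` matrix `X` of determinant one is unitary iff `Xᴴ = adj X`, and for symmetric `X`
these entrywise conditions say exactly that `X` is a symmetric real quaternion.
A unitary `U` has `|det U| = 1`, so choosing `z` with `z² = det U` puts `z⁻¹ U` in that set.
On the other hand `z • X = z' • X'` with `det X = det X' = 1` forces `z² = z'²`, i.e. `z' = ±z`.
-/

open Complex Matrix ComplexConjugate

namespace Matrix

variable {m n : Type*} [Fintype m]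

lemma mul_eq_one_iff_eq_adjugate [Fintype n] [DecidableEq n] {R : Type*} [CommRing R]
    {A B : Matrix n n R} (hA : A.det = 1) :
    B * A = 1 ↔ B = adjugate A := by
  constructor
  · intro h
    calc B = B * (A * adjugate A) := by rw [mul_adjugate, hA, one_smul, Matrix.mul_one]
      _ = adjugate A := by rw [← Matrix.mul_assoc, h, Matrix.one_mul]
  · rintro rfl
    rw [adjugate_mul, hA, one_smul]

lemma conjTranspose_smul_mul_smul {𝕜 : Type*} [RCLike 𝕜] {z : 𝕜} (hz : ‖z‖ = 1)
    (A : Matrix m n 𝕜) :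
    (z • A)ᴴ * (z • A) = Aᴴ * A := by
  rw [conjTranspose_smul, Matrix.smul_mul, Matrix.mul_smul, smul_smul, RCLike.star_def,
    RCLike.conj_mul, hz, RCLike.ofReal_one, one_pow, one_smul]

lemma exists_norm_eq_one_pow_card_eq_det [Fintype n] [DecidableEq n] [Nonempty n]
    {U : Matrix n n ℂ} (hU : Uᴴ * U = 1) :
    ∃ z : ℂ, ‖z‖ = 1 ∧ z ^ Fintype.card n = U.det := by
  have hdet : ‖U.det‖ = 1 :=
    CStarRing.norm_of_mem_unitary (det_of_mem_unitary (mem_unitaryGroup_iff'.2 hU))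
  obtain ⟨z, hz⟩ := IsAlgClosed.exists_pow_nat_eq U.det (Fintype.card_pos (α := n))
  refine ⟨z, ?_, hz⟩
  rwa [← hz, norm_pow, pow_eq_one_iff_of_nonneg (norm_nonneg z) Fintype.card_ne_zero] at hdet

lemma smul_eq_smul_iff_of_det_eq_one {K : Type*} [Field K]
    {X X' : Matrix (Fin 2) (Fin 2) K} {z z' : K} (hz : z ≠ 0) (hX : X.det = 1)
    (hX' : X'.det = 1) :
    z • X = z' • X' ↔ (X' = X ∧ z' = z) ∨ (X' = -X ∧ z' = -z) := by
  constructor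
  · intro h
    have hsq : z' ^ 2 = z ^ 2 := by
      simpa [det_smul, hX, hX'] using (congrArg det h).symm
    rcases sq_eq_sq_iff_eq_or_eq_neg.1 hsq with rfl | rfl
    · exact .inl ⟨(smul_right_injective _ hz h).symm, rfl⟩
    · rw [neg_smul, ← smul_neg] at h
      exact .inr ⟨neg_eq_iff_eq_neg.1 (smul_right_injective _ hz h).symm, rfl⟩
  · rintro (⟨rfl, rfl⟩ | ⟨rfl, rfl⟩)
    · rfl
    · rw [neg_smul_neg]

end Matrix

lemma isSymRealQuat_iff {X : Matrix (Fin 2) (Fin 2) ℂ} :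
    IsSymRealQuat X ↔ Xᵀ = X ∧ Xᴴ = adjugate X := by
  constructor
  · rintro ⟨x0, x1, x3, rfl⟩
    constructor <;> ext i j <;> fin_cases i <;> fin_cases j <;>
      simp [adjugate_fin_two, sub_eq_add_neg]
  · rintro ⟨hsym, hadj⟩
    have h10 : X 1 0 = X 0 1 := congrFun (congrFun hsym 0) 1
    have h11 : X 1 1 = conj (X 0 0) := by
      simpa [adjugate_fin_two] using (congrFun (congrFun hadj 0) 0).symm
    have h01 : conj (X 0 1) = -X 0 1 := by
      simpa [adjugate_fin_two, h10] using congrFun (congrFun hadj 1) 0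
    have hre : (X 0 1).re = 0 := by
      have := congrArg re h01
      simp only [conj_re, neg_re] at this
      linarith
    refine ⟨(X 0 0).re, -(X 0 1).im, -(X 0 0).im, ?_⟩
    ext i j
    fin_cases i <;> fin_cases j <;> apply Complex.ext <;> simp [h10, h11, hre]

lemma isSymRealQuat_iff_of_det_eq_one {X : Matrix (Fin 2) (Fin 2) ℂ} (hX : X.det = 1) :
    IsSymRealQuat X ↔ Xᵀ = X ∧ Xᴴ * X = 1 := by
  rw [isSymRealQuat_iff, mul_eq_one_iff_eq_adjugate hX]

lemma exists_isSymRealQuat_smul {U : Matrix (Fin 2) (Fin 2) ℂ} (hsym : Uᵀ = U)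
    (hU : Uᴴ * U = 1) :
    ∃ (X : Matrix (Fin 2) (Fin 2) ℂ) (z : ℂ),
      IsSymRealQuat X ∧ X.det = 1 ∧ ‖z‖ = 1 ∧ U = z • X := by
  obtain ⟨z, hz, hzdet⟩ := exists_norm_eq_one_pow_card_eq_det hU
  have hz0 : z ≠ 0 := norm_ne_zero_iff.1 (hz ▸ one_ne_zero)
  have hdet : (z⁻¹ • U).det = 1 := by
    rw [det_smul, ← hzdet, inv_pow, inv_mul_cancel₀ (pow_ne_zero _ hz0)]
  refine ⟨z⁻¹ • U, z, (isSymRealQuat_iff_of_det_eq_one hdet).2 ⟨?_, ?_⟩, hdet, hz,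
    (smul_inv_smul₀ hz0 U).symm⟩
  · rw [transpose_smul, hsym]
  · rw [conjTranspose_smul_mul_smul (by rw [norm_inv, hz, inv_one]), hU]

/-- The set `Γ` of symmetric unitary `2×2` matrices coincides with the image of
`(X, z) ↦ z • X` from `{X ∈ ℍ : Xᵀ = X, N(X) = 1} × {z ∈ ℂ : |z| = 1}`, and this map is
2-to-1: `(X, z)` and `(-X, -z)` (and only they) have the same image. -/
theorem symmetric_unitary_double_cover :
    (∀ U : Matrix (Fin 2) (Fin 2) ℂ,
      (U.transpose = U ∧ U.conjTranspose * U = 1) ↔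
        ∃ (X : Matrix (Fin 2) (Fin 2) ℂ) (z : ℂ),
          IsSymRealQuat X ∧ X.det = 1 ∧ ‖z‖ = 1 ∧ U = z • X) ∧
    (∀ (X X' : Matrix (Fin 2) (Fin 2) ℂ) (z z' : ℂ),
      IsSymRealQuat X → X.det = 1 → ‖z‖ = 1 →
      IsSymRealQuat X' → X'.det = 1 → ‖z'‖ = 1 →
      (z • X = z' • X' ↔ (X' = X ∧ z' = z) ∨ (X' = -X ∧ z' = -z))) := by
  refine ⟨fun U => ⟨fun ⟨hsym, hU⟩ => exists_isSymRealQuat_smul hsym hU, ?_⟩,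
    fun X X' z z' _ hX hz _ hX' _ =>
      smul_eq_smul_iff_of_det_eq_one (norm_ne_zero_iff.1 (hz ▸ one_ne_zero)) hX hX'⟩
  rintro ⟨X, z, hXquat, hX, hz, rfl⟩
  obtain ⟨hsym, hunit⟩ := (isSymRealQuat_iff_of_det_eq_one hX).1 hXquat
  exact ⟨by rw [transpose_smul, hsym], by rw [conjTranspose_smul_mul_smul hz, hunit]⟩
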